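/- arXiv:1811.02753 — 4 statements merged into one kernel-verified Lean document; each statement's English description precedes it below -/
import Mathlib

section
/- Let M be a ℤ-module with a symmetric bilinear form, let ℓ ∈ ℤ, and let σ ∈ M with σ·σ = 2ℓ. Then the ℤ-linear map E_σ : M × H → M × H determined by a ↦ a + σ - ℓa*, a* ↦ a*, and ξ ↦ ξ - (ξ·σ)a* for ξ ∈ M preserves the orthogonal direct sum form: E_σ(x)·E_σ(y) = x·y for all x, y ∈ M × H. -/
/-! Expanding `E_σ(ξ,p,q) · E_σ(η,r,s)`, the cross terms `p (σ·η) + r (ξ·σ)` from the `M`-part cancel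
against the `a*`-corrections `-p (η·σ) - r (ξ·σ)` by symmetry, and `p r (σ·σ) = 2 p r ℓ` cancels
against `-2 p r ℓ`. -/

theorem LinearMap.apply_add_zsmul_add_zsmul {M : Type*} [AddCommGroup M] [Module ℤ M]
    (B : M →ₗ[ℤ] M →ₗ[ℤ] ℤ) (ξ η σ : M) (p q : ℤ) :
    B (ξ + p • σ) (η + q • σ) = B ξ η + q * B ξ σ + p * B σ η + p * q * B σ σ := by
  simp only [map_add, map_zsmul, add_apply, smul_apply, Int.zsmul_eq_mul]
  ring

/-- A general element `ξ + p·a + q·a*` of `M × H` is written `(ξ, p, q)`, so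
`E_σ(ξ, p, q) = (ξ + pσ, p, q - ξ·σ - pℓ)`. -/
theorem elementary_automorphism_preserves_form
    (M : Type*) [AddCommGroup M] [Module ℤ M]
    (B : M →ₗ[ℤ] M →ₗ[ℤ] ℤ) (hB : ∀ x y : M, B x y = B y x)
    (ℓ : ℤ) (σ : M) (hσ : B σ σ = 2 * ℓ) :
    let Q : M × ℤ × ℤ → M × ℤ × ℤ → ℤ :=
      fun x y => B x.1 y.1 + (x.2.1 * y.2.2 + x.2.2 * y.2.1)
    let E : M × ℤ × ℤ → M × ℤ × ℤ :=
      fun x => (x.1 + x.2.1 • σ, (x.2.1, x.2.2 - B x.1 σ - x.2.1 * ℓ))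
    ∀ x y : M × ℤ × ℤ, Q (E x) (E y) = Q x y := by
  intro Q E x y
  simp only [Q, E]
  rw [B.apply_add_zsmul_add_zsmul, hσ, hB σ]
  ring
end

section
/- Let M be a ℤ-module with a symmetric bilinear form, let ε ∈ {1, -1}, and let σ ∈ M with σ·σ = 2ε. Then the composition Φ = E_σ ∘ E*_{εσ} ∘ E_σ : M × H → M × H satisfies Φ(a*) = -εa; in particular Φ(a*)·a* = -ε, which is ±1. -/
theorem composition_sends_astar_to_neg_eps_a_general
    (M : Type*) [AddCommGroup M] [Module ℤ M]
    (B : M →ₗ[ℤ] M →ₗ[ℤ] ℤ)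
    (ε : ℤ) (hε : ε = 1 ∨ ε = -1)
    (σ : M) (hσ : B σ σ = 2 * ε) :
    let Q : M × ℤ × ℤ → M × ℤ × ℤ → ℤ :=
      fun x y => B x.1 y.1 + (x.2.1 * y.2.2 + x.2.2 * y.2.1)
    let E : M × ℤ × ℤ → M × ℤ × ℤ :=
      fun x => (x.1 + x.2.1 • σ, (x.2.1, x.2.2 - B x.1 σ - x.2.1 * ε))
    let Estar : M × ℤ × ℤ → M × ℤ × ℤ :=
      fun x => (x.1 + (x.2.2 * ε) • σ, (x.2.1 - ε * B x.1 σ - x.2.2 * ε, x.2.2))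
    let Φ : M × ℤ × ℤ → M × ℤ × ℤ := E ∘ Estar ∘ E
    let astar : M × ℤ × ℤ := ((0 : M), ((0 : ℤ), (1 : ℤ)))
    Φ astar = ((0 : M), (-ε, (0 : ℤ))) ∧ Q (Φ astar) astar = -ε ∧
      (-ε = 1 ∨ -ε = -1) := by
  intro Q E Estar Φ astar
  have hεε : ε * ε = 1 := mul_self_eq_one_iff.mpr hε
  have hE_astar : E astar = astar := by simp [E, astar]
  have hEstar_astar : Estar astar = (ε • σ, -ε, 1) := by simp [Estar, astar]
  -- the `a*`-coefficient is `1 - ε (σ·σ) + ε² = 1 - ε²`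
  have hE_last : E (ε • σ, -ε, 1) = (0, -ε, 0) := by
    refine Prod.ext (by simp [E]) (Prod.ext rfl ?_)
    simp only [E, map_zsmul, LinearMap.smul_apply, hσ, smul_eq_mul]
    linear_combination -hεε
  have hΦ : Φ astar = (0, -ε, 0) := by
    simp only [Φ, Function.comp_apply, hE_astar, hEstar_astar, hE_last]
  refine ⟨hΦ, ?_, by omega⟩
  simp [Q, hΦ, astar]

/-- For `σ ∈ M` with `σ·σ = 2ε` (`ε = ±1`), the composition
`Φ = E_σ ∘ E*_{εσ} ∘ E_σ` on `M × H` (general element `ξ + p·a + q·a*` written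
`(ξ, p, q)`, so `a = (0,1,0)` and `a* = (0,0,1)`) satisfies `Φ(a*) = -ε·a`;
in particular `Φ(a*)·a* = -ε`, which is `±1`. -/
theorem composition_sends_astar_to_neg_eps_a
    (M : Type*) [AddCommGroup M] [Module ℤ M]
    (B : M →ₗ[ℤ] M →ₗ[ℤ] ℤ) (hB : ∀ x y : M, B x y = B y x)
    (ε : ℤ) (hε : ε = 1 ∨ ε = -1)
    (σ : M) (hσ : B σ σ = 2 * ε) :
    let Q : M × ℤ × ℤ → M × ℤ × ℤ → ℤ :=
      fun x y => B x.1 y.1 + (x.2.1 * y.2.2 + x.2.2 * y.2.1)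
    let E : M × ℤ × ℤ → M × ℤ × ℤ :=
      fun x => (x.1 + x.2.1 • σ, (x.2.1, x.2.2 - B x.1 σ - x.2.1 * ε))
    let Estar : M × ℤ × ℤ → M × ℤ × ℤ :=
      fun x => (x.1 + (x.2.2 * ε) • σ, (x.2.1 - ε * B x.1 σ - x.2.2 * ε, x.2.2))
    let Φ : M × ℤ × ℤ → M × ℤ × ℤ := E ∘ Estar ∘ E
    let astar : M × ℤ × ℤ := ((0 : M), ((0 : ℤ), (1 : ℤ)))
    Φ astar = ((0 : M), (-ε, (0 : ℤ))) ∧ Q (Φ astar) astar = -ε ∧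
      (-ε = 1 ∨ -ε = -1) :=
  composition_sends_astar_to_neg_eps_a_general M B ε hε σ hσ
end

section
/- Let M be a ℤ-module with a symmetric bilinear form, let ε ∈ {1, -1}, and let σ ∈ M with σ·σ = 2ε. Then the composition Φ = E_σ ∘ E*_{εσ} ∘ E_σ : M × H → M × H satisfies, for every ξ ∈ M (viewed as (ξ,0) ∈ M × H), Φ(ξ) = ξ - ε(ξ·σ)σ; that is, Φ restricted to M equals the reflection ρ_σ. -/
/-! The reflection `ρ_σ ξ = ξ - ε(ξ·σ)σ` negates `ξ·σ` because `σ·σ = 2ε` and `ε² = 1`.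
Tracking `ξ` through the three maps: `E_σ` only adds `-(ξ·σ) a*`; `E*_{εσ}` then turns this
`a*`-coordinate into `-ε(ξ·σ)σ`, i.e. applies `ρ_σ`, and cancels its own `a`-contribution;
the last `E_σ` subtracts `ρ_σ ξ · σ = -(ξ·σ)` from the `a*`-coordinate, which is thus cleared. -/

theorem bilinForm_reflection_left_eq_neg {M : Type*} [AddCommGroup M] [Module ℤ M]
    (B : M →ₗ[ℤ] M →ₗ[ℤ] ℤ) {ε : ℤ} (hε : ε * ε = 1) {σ : M} (hσ : B σ σ = 2 * ε) (ξ : M) :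
    B (ξ - (ε * B ξ σ) • σ) σ = -B ξ σ := by
  rw [map_sub, map_zsmul, LinearMap.sub_apply, LinearMap.smul_apply, hσ, smul_eq_mul]
  linear_combination (-2 * B ξ σ) * hε

theorem composition_restricts_to_reflection_general
    (M : Type*) [AddCommGroup M] [Module ℤ M]
    (B : M →ₗ[ℤ] M →ₗ[ℤ] ℤ)
    (ε : ℤ) (hε : ε = 1 ∨ ε = -1)
    (σ : M) (hσ : B σ σ = 2 * ε) :
    let E : M × ℤ × ℤ → M × ℤ × ℤ :=
      fun x => (x.1 + x.2.1 • σ, (x.2.1, x.2.2 - B x.1 σ - x.2.1 * ε))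
    let Estar : M × ℤ × ℤ → M × ℤ × ℤ :=
      fun x => (x.1 + (x.2.2 * ε) • σ, (x.2.1 - ε * B x.1 σ - x.2.2 * ε, x.2.2))
    let Φ : M × ℤ × ℤ → M × ℤ × ℤ := E ∘ Estar ∘ E
    ∀ ξ : M, Φ (ξ, ((0 : ℤ), (0 : ℤ))) = (ξ - (ε * B ξ σ) • σ, ((0 : ℤ), (0 : ℤ))) := by
  intro E Estar Φ ξ
  have hεε : ε * ε = 1 := by rcases hε with rfl | rfl <;> rfl
  have hρ := bilinForm_reflection_left_eq_neg B hεε hσ ξ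
  have hEstar : Estar (E (ξ, 0, 0)) = (ξ - (ε * B ξ σ) • σ, 0, -B ξ σ) := by
    simp only [E, Estar, Prod.mk.injEq, zero_smul, add_zero]
    refine ⟨?_, by ring, by ring⟩
    rw [show (0 - B ξ σ - 0 * ε) * ε = -(ε * B ξ σ) by ring, neg_zsmul, sub_eq_add_neg]
  change E (Estar (E (ξ, 0, 0))) = _
  rw [hEstar]
  simp only [E, hρ, zero_smul, add_zero, zero_mul, sub_zero, sub_neg_eq_add, neg_add_cancel]

/-- For `σ ∈ M` with `σ·σ = 2ε` (`ε = ±1`), the composition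
`Φ = E_σ ∘ E*_{εσ} ∘ E_σ` on `M × H` (general element `ξ + p·a + q·a*` written
`(ξ, p, q)`) satisfies `Φ(ξ) = ξ - ε(ξ·σ)σ` for every `ξ ∈ M`, i.e. `Φ`
restricted to `M` equals the reflection `ρ_σ`. -/
theorem composition_restricts_to_reflection
    (M : Type*) [AddCommGroup M] [Module ℤ M]
    (B : M →ₗ[ℤ] M →ₗ[ℤ] ℤ) (hB : ∀ x y : M, B x y = B y x)
    (ε : ℤ) (hε : ε = 1 ∨ ε = -1)
    (σ : M) (hσ : B σ σ = 2 * ε) :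
    let E : M × ℤ × ℤ → M × ℤ × ℤ :=
      fun x => (x.1 + x.2.1 • σ, (x.2.1, x.2.2 - B x.1 σ - x.2.1 * ε))
    let Estar : M × ℤ × ℤ → M × ℤ × ℤ :=
      fun x => (x.1 + (x.2.2 * ε) • σ, (x.2.1 - ε * B x.1 σ - x.2.2 * ε, x.2.2))
    let Φ : M × ℤ × ℤ → M × ℤ × ℤ := E ∘ Estar ∘ E
    ∀ ξ : M, Φ (ξ, ((0 : ℤ), (0 : ℤ))) = (ξ - (ε * B ξ σ) • σ, ((0 : ℤ), (0 : ℤ))) :=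
  composition_restricts_to_reflection_general M B ε hε σ hσ
end

section
/- Let M be a ℤ-module with a symmetric bilinear form B, and let y ∈ M be characteristic with y·y = k where k ≥ -1. Equip M × ℤ^{k+1} with the orthogonal direct sum of B and the negative-definite diagonal form on ℤ^{k+1}. Then the element y' = (y, -Σ_{i=1}^{k+1} eᵢ) is characteristic for the direct sum form and satisfies y'·y' = -1. -/
/-! The diagonal form `-∑ xᵢ²` has the all-`(-1)` vector as a characteristic element, since
`x² ≡ x (mod 2)`, and characteristic elements of an orthogonal sum are the pairs of characteristic
elements. The square is then `y·y - (k + 1) = -1`. -/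

def IsCharacteristic {V : Type*} (Q : V → V → ℤ) (y : V) : Prop :=
  ∀ x, Q y x ≡ Q x x [ZMOD 2]

theorem Int.mul_self_modEq_two (a : ℤ) : a * a ≡ a [ZMOD 2] :=
  (Int.modEq_iff_dvd.mpr <| by simpa [mul_sub] using (Int.even_mul_pred_self a).two_dvd).symm

theorem isCharacteristic_neg_one_negDiagonal (ι : Type*) [Fintype ι] :
    IsCharacteristic (fun u v : ι → ℤ => -∑ i, u i * v i) (fun _ => -1) := by
  intro x
  refine Int.ModEq.neg (Int.ModEq.sum fun i _ => ?_)
  calc -1 * x i ≡ x i [ZMOD 2] := Int.modEq_iff_dvd.mpr ⟨x i, by ring⟩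
    _ ≡ x i * x i [ZMOD 2] := (Int.mul_self_modEq_two _).symm

theorem IsCharacteristic.prod {V W : Type*} {Q₁ : V → V → ℤ} {Q₂ : W → W → ℤ} {y₁ : V} {y₂ : W}
    (h₁ : IsCharacteristic Q₁ y₁) (h₂ : IsCharacteristic Q₂ y₂) :
    IsCharacteristic (fun u v : V × W => Q₁ u.1 v.1 + Q₂ u.2 v.2) (y₁, y₂) :=
  fun x => (h₁ x.1).add (h₂ x.2)

theorem stabilized_characteristic_class_square_neg_one_general
    (M : Type*) [AddCommGroup M] [Module ℤ M]
    (B : M →ₗ[ℤ] M →ₗ[ℤ] ℤ)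
    (k : ℤ)
    (y : M) (hy : ∀ x : M, B y x ≡ B x x [ZMOD 2]) (hyy : B y y = k)
    (n : ℕ) (hn : (n : ℤ) = k + 1) :
    let Q : M × (Fin n → ℤ) → M × (Fin n → ℤ) → ℤ :=
      fun u v => B u.1 v.1 + -∑ i : Fin n, u.2 i * v.2 i
    let y' : M × (Fin n → ℤ) := (y, fun _ => -1)
    (∀ x : M × (Fin n → ℤ), Q y' x ≡ Q x x [ZMOD 2]) ∧ Q y' y' = -1 := by
  intro Q y'
  refine ⟨IsCharacteristic.prod (Q₁ := fun a b => B a b) hy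
    (isCharacteristic_neg_one_negDiagonal (Fin n)), ?_⟩
  change B y y + -∑ _i : Fin n, (-1 : ℤ) * -1 = -1
  simp only [mul_neg_one, neg_neg, Finset.sum_const, Finset.card_univ, Fintype.card_fin,
    nsmul_one, hyy, hn]
  ring

/-- Let `y ∈ M` be characteristic for `B` with `y·y = k`,
`k ≥ -1`.  On `M × ℤ^{k+1}` (with `ℤ^{k+1}` realized as `Fin n → ℤ` where
`(n : ℤ) = k + 1`), equipped with the orthogonal direct sum of `B` and the
negative-definite diagonal form, the element `y' = (y, -∑_{i=1}^{k+1} eᵢ)` is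
characteristic and satisfies `y'·y' = -1`. -/
theorem stabilized_characteristic_class_square_neg_one
    (M : Type*) [AddCommGroup M] [Module ℤ M]
    (B : M →ₗ[ℤ] M →ₗ[ℤ] ℤ) (hB : ∀ x y : M, B x y = B y x)
    (k : ℤ) (hk : -1 ≤ k)
    (y : M) (hy : ∀ x : M, B y x ≡ B x x [ZMOD 2]) (hyy : B y y = k)
    (n : ℕ) (hn : (n : ℤ) = k + 1) :
    let Q : M × (Fin n → ℤ) → M × (Fin n → ℤ) → ℤ :=
      fun u v => B u.1 v.1 + -∑ i : Fin n, u.2 i * v.2 i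
    let y' : M × (Fin n → ℤ) := (y, fun _ => -1)
    (∀ x : M × (Fin n → ℤ), Q y' x ≡ Q x x [ZMOD 2]) ∧ Q y' y' = -1 :=
  stabilized_characteristic_class_square_neg_one_general M B k y hy hyy n hn
end
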